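/- For variables x_1,...,x_{n+1} and r ≥ n, the ratio of determinants det[rows: (1,...,1), (x_1,...,x_{n+1}), ..., (x_1^{n-1},...,x_{n+1}^{n-1}), (x_1^r,...,x_{n+1}^r)] divided by the Vandermonde determinant det[(x_i^j)_{j=0..n, i=1..n+1}] equals the complete sum over all monomials x_1^{j_1}···x_{n+1}^{j_{n+1}} with j_1+···+j_{n+1} = r−n, i.e., the complete homogeneous symmetric polynomial h_{r−n}(x_1,...,x_{n+1}). -/

import Mathlib

/-!
Expanding the determinant along its last row `(x_j ^ s)_j` writes it as `u s = ∑ j, c j * x j ^ s`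
with cofactors `c j` independent of `s`: a linear combination of `n + 1` geometric sequences.
Its generating function is therefore `N / P` with `P = ∏ i, (1 - x_i X)` and `deg N ≤ n`.
Since `u s = 0` for `s < n` (two equal rows), `N` is divisible by `X ^ n`, hence `N = u n * X ^ n`,
and `u (n + m) = u n * [X ^ m] (1 / P) = u n * h_m(x)`, where `u n` is the Vandermonde determinant
and `1 / P` is the product of the geometric series `∑ k, x_i ^ k X ^ k`.
-/

open Finset PowerSeries Matrix

namespace PowerSeries

variable {R : Type*} [CommRing R]

theorem mk_pow_mul_one_sub_C_mul_X (a : R) : mk (a ^ ·) * (1 - C a * X) = 1 := by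
  simpa [rescale_mk, rescale_X] using congrArg (rescale a) (mk_one_mul_one_sub_eq_one R)

theorem coeff_prod_mk_pow {k : ℕ} (x : Fin k → R) (m : ℕ) :
    coeff m (∏ i, mk (x i ^ ·)) = ∑ t ∈ Nat.antidiagonalTuple k m, ∏ i, x i ^ t i := by
  rw [coeff_prod, finsuppAntidiag, sum_map, ← piAntidiag_univ_fin_eq_antidiagonalTuple]
  simp only [coeff_mk]
  exact sum_attach (piAntidiag univ m) fun t => ∏ i, x i ^ t i

theorem coeff_prod_one_sub_C_mul_X_eq_zero {ι : Type*} (s : Finset ι) (x : ι → R) {k : ℕ}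
    (hk : s.card < k) : coeff k (∏ i ∈ s, (1 - C (x i) * X)) = 0 := by
  classical
  induction s using Finset.induction_on generalizing k with
  | empty => simp [coeff_one, (Nat.zero_lt_of_lt hk).ne']
  | @insert a s ha ih =>
    rw [card_insert_of_notMem ha] at hk
    obtain ⟨k, rfl⟩ : ∃ j, k = j + 1 := ⟨k - 1, by omega⟩
    rw [prod_insert ha, sub_mul, one_mul, mul_assoc, map_sub, coeff_C_mul, coeff_succ_X_mul,
      ih (by omega), ih (by omega), mul_zero, sub_zero]

end PowerSeries

theorem sum_mul_pow_add_eq_mul_sum_antidiagonalTuple {R : Type*} [CommRing R] {n : ℕ}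
    (x c : Fin (n + 1) → R) (hlow : ∀ s < n, ∑ j, c j * x j ^ s = 0) (m : ℕ) :
    ∑ j, c j * x j ^ (n + m) =
      (∑ j, c j * x j ^ n) * ∑ t ∈ Nat.antidiagonalTuple (n + 1) m, ∏ i, x i ^ t i := by
  set u : ℕ → R := fun s => ∑ j, c j * x j ^ s
  set P : R⟦X⟧ := ∏ i, (1 - C (x i) * X) with hP
  have hgeom : mk u = ∑ j, C (c j) * mk (x j ^ ·) := by
    ext s
    simp [u, map_sum]
  have hshift : mk u = X ^ n * PowerSeries.mk (fun m => u (n + m)) := by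
    ext s
    rw [coeff_X_pow_mul', coeff_mk]
    split_ifs with h
    · rw [coeff_mk, Nat.add_sub_cancel' h]
    · exact hlow s (by omega)
  have hdeg : ∀ k, n < k → coeff k (mk u * P) = 0 := by
    intro k hk
    rw [hgeom, sum_mul, map_sum]
    refine sum_eq_zero fun j _ => ?_
    rw [hP, ← mul_prod_erase univ _ (mem_univ j), mul_assoc, ← mul_assoc (PowerSeries.mk _),
      mk_pow_mul_one_sub_C_mul_X, one_mul, coeff_C_mul,
      coeff_prod_one_sub_C_mul_X_eq_zero _ _ (by simpa using hk), mul_zero]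
  have hkey : mk (fun m => u (n + m)) * P = C (u n) := by
    ext (_ | m)
    · simp [P]
    · rw [coeff_C, if_neg m.succ_ne_zero, ← coeff_X_pow_mul _ n, ← mul_assoc, ← hshift,
        hdeg _ (by omega)]
  have hinv : mk (fun m => u (n + m)) = C (u n) * ∏ i, mk (x i ^ ·) := by
    rw [← hkey, mul_assoc, hP, ← prod_mul_distrib,
      prod_eq_one fun i _ => by rw [mul_comm, mk_pow_mul_one_sub_C_mul_X], mul_one]
  simpa [coeff_prod_mk_pow] using congrArg (coeff m) hinv

theorem Matrix.exists_det_updateRow_eq_sum {R : Type*} [CommRing R] {n : ℕ}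
    (A : Matrix (Fin (n + 1)) (Fin (n + 1)) R) (i : Fin (n + 1)) :
    ∃ c : Fin (n + 1) → R, ∀ v, (A.updateRow i v).det = ∑ j, c j * v j :=
  ⟨fun j => (-1) ^ (i + j : ℕ) * (A.submatrix i.succAbove j.succAbove).det, fun v => by
    simp [det_succ_row _ i, submatrix_updateRow_succAbove, mul_right_comm]⟩

/-- The ratio of the modified Vandermonde determinant (last power row `x_j^n`
replaced by `x_j^r`) to the Vandermonde determinant equals the complete
homogeneous symmetric polynomial `h_{r-n}` in the `n+1` variables. -/
theorem stmt_0 (K : Type*) [Field K] (n r : ℕ) (hr : n ≤ r)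
    (x : Fin (n + 1) → K) (hx : Function.Injective x) :
    (Matrix.of fun i j : Fin (n + 1) =>
        if (i : ℕ) < n then x j ^ (i : ℕ) else x j ^ r).det /
      (Matrix.vandermonde x).det =
    ∑ j ∈ Finset.Nat.antidiagonalTuple (n + 1) (r - n), ∏ i, x i ^ j i := by
  obtain ⟨m, rfl⟩ := Nat.exists_eq_add_of_le hr
  rw [Nat.add_sub_cancel_left]
  set M : ℕ → Matrix (Fin (n + 1)) (Fin (n + 1)) K := fun s =>
    Matrix.of fun i j => if (i : ℕ) < n then x j ^ (i : ℕ) else x j ^ s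
  have hrow : ∀ s, M s = (M 0).updateRow (Fin.last n) (x · ^ s) := by
    intro s
    ext i j
    rcases Fin.eq_castSucc_or_eq_last i with ⟨i, rfl⟩ | rfl <;> simp [M]
  obtain ⟨c, hc⟩ := (M 0).exists_det_updateRow_eq_sum (Fin.last n)
  have hdet : ∀ s, (M s).det = ∑ j, c j * x j ^ s := fun s => by rw [hrow, hc]
  have hlow : ∀ s < n, (M s).det = 0 := fun s hs =>
    det_zero_of_row_eq (i := ⟨s, by omega⟩) (j := Fin.last n) (Fin.ne_of_lt hs)
      (by ext; simp [M, hs])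
  have hvdm : M n = (vandermonde x)ᵀ := by
    ext i j
    rcases Fin.eq_castSucc_or_eq_last i with ⟨i, rfl⟩ | rfl <;> simp [M]
  rw [div_eq_iff (det_vandermonde_ne_zero_iff.mpr hx), hdet,
    sum_mul_pow_add_eq_mul_sum_antidiagonalTuple x c fun s hs => by rw [← hdet, hlow s hs],
    ← hdet, hvdm, det_transpose, mul_comm]
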